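/- arXiv:2602.11722 — 2 statements merged into one kernel-verified Lean document; each statement's English description precedes it below -/
import Mathlib

section
/- Let α ∈ ℝ≥0ⁿ with Σⱼ αⱼ = 1, and let m* = max over subsets J ⊆ {1,…,n} with Σ_{j∈J} αⱼ < 1/2 of Σ_{j∈J} αⱼ. If {A,B} is a partition of {1,…,n} minimizing |Σ_{j∈A} αⱼ − Σ_{j∈B} αⱼ|, and ᾰ = max(Σ_{j∈A} αⱼ, Σ_{j∈B} αⱼ) ≥ 1/2, then m* = 1 − ᾰ. -/
/-- Combinatorial fact for the Categorical posterior: with nonnegative weights summing to 1,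
if `{A, Aᶜ}` is a minimizing partition with larger side `ᾰ > 1/2`, then the largest
subset-sum strictly below `1/2` is `1 − ᾰ`. -/
theorem max_subset_sum_below_half
    (n : ℕ) (α : Fin n → ℝ) (hα : ∀ j, 0 ≤ α j) (hsum : ∑ j, α j = 1)
    (A : Finset (Fin n))
    (hmin : ∀ C : Finset (Fin n),
      |∑ j ∈ A, α j - ∑ j ∈ Aᶜ, α j| ≤ |∑ j ∈ C, α j - ∑ j ∈ Cᶜ, α j|)
    (ᾰ : ℝ) (hᾰ : ᾰ = max (∑ j ∈ A, α j) (∑ j ∈ Aᶜ, α j))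
    (hhalf : 1 / 2 < ᾰ) :
    IsGreatest
      {s : ℝ | ∃ J : Finset (Fin n), (∑ j ∈ J, α j) < 1 / 2 ∧ s = ∑ j ∈ J, α j}
      (1 - ᾰ) := by
  have hcompl : ∀ C : Finset (Fin n), ∑ j ∈ Cᶜ, α j = 1 - ∑ j ∈ C, α j := by
    intro C
    have h := Finset.sum_add_sum_compl C α
    rw [hsum] at h
    linarith
  have ha : ∑ j ∈ Aᶜ, α j = 1 - ∑ j ∈ A, α j := hcompl A
  set a := ∑ j ∈ A, α j with hadef
  have habs : |a - ∑ j ∈ Aᶜ, α j| = 2 * ᾰ - 1 := by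
    rw [ha]
    rcases le_total a (1 - a) with h | h
    · rw [hᾰ, ha, max_eq_right h, abs_of_nonpos] <;> ring_nf <;> linarith
    · rw [hᾰ, ha, max_eq_left h, abs_of_nonneg] <;> ring_nf <;> linarith
  constructor
  · rcases le_total a (1 - a) with h | h
    · have hᾰ' : ᾰ = 1 - a := by rw [hᾰ, ha, max_eq_right h]
      exact ⟨A, by rw [← hadef]; linarith, by rw [← hadef]; linarith⟩
    · have hᾰ' : ᾰ = a := by rw [hᾰ, ha, max_eq_left h]
      refine ⟨Aᶜ, ?_, ?_⟩ <;> rw [ha] <;> linarith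
  · rintro s ⟨J, hJ, rfl⟩
    have h1 := hmin J
    rw [habs, hcompl J] at h1
    have h2 : |∑ j ∈ J, α j - (1 - ∑ j ∈ J, α j)| = 1 - 2 * ∑ j ∈ J, α j := by
      rw [abs_of_nonpos] <;> linarith
    rw [h2] at h1
    linarith
end

section
/- The regularized incomplete beta function (a, b) ↦ I_{1/2}(a, b), for a, b > 0, is nonincreasing in a and nondecreasing in b. Consequently, for s ∈ (0, T) with T = a + b fixed, s ↦ I_{1/2}(T − s, s) is nondecreasing in s. -/
open MeasureTheory

/-- The (unregularized) incomplete beta integral `B(x; a, b)`. -/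
noncomputable def incBeta (x a b : ℝ) : ℝ :=
  ∫ t in (0:ℝ)..x, t ^ (a - 1) * (1 - t) ^ (b - 1)

/-- The regularized incomplete beta function `I_x(a,b) = B(x;a,b)/B(a,b)`. -/
noncomputable def regIncBeta (x a b : ℝ) : ℝ := incBeta x a b / incBeta 1 a b

/-!
Splitting the Beta integral at `x` writes `I_x(a,b) = L / (L + R)`, with `L` and `R` the integrals
of `t^(a-1) (1-t)^(b-1)` over `[0,x]` and `[x,1]`. Raising `a` to `a'` multiplies the integrand by
`t^(a'-a)`, which is smaller at every point of `[0,x]` than at every point of `[x,1]`; integrating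
this pointwise cross inequality gives `L' R ≤ L R'`, i.e. `I_x(a',b) ≤ I_x(a,b)`.
Monotonicity in `b` follows from the reflection `t ↦ 1 - t`, which gives
`I_x(a,b) + I_{1-x}(b,a) = 1`.
-/

open Set intervalIntegral

theorem Real.rpow_mul_rpow_le_rpow_mul_rpow {t s p q : ℝ} (ht : 0 < t) (hts : t ≤ s)
    (hpq : p ≤ q) : t ^ q * s ^ p ≤ t ^ p * s ^ q := by
  have hs : 0 < s := ht.trans_le hts
  calc t ^ q * s ^ p = t ^ p * s ^ p * t ^ (q - p) := by
        rw [mul_right_comm, ← Real.rpow_add ht, add_sub_cancel]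
    _ ≤ t ^ p * s ^ p * s ^ (q - p) := by gcongr
    _ = t ^ p * s ^ q := by rw [mul_assoc, ← Real.rpow_add hs, add_sub_cancel]

theorem intervalIntegral.integral_mul_integral_le_of_mul_le_mul {f g : ℝ → ℝ} {a b c : ℝ}
    (hac : a ≤ c) (hcb : c ≤ b)
    (hf₁ : IntervalIntegrable f volume a c) (hf₂ : IntervalIntegrable f volume c b)
    (hg₁ : IntervalIntegrable g volume a c) (hg₂ : IntervalIntegrable g volume c b)
    (h : ∀ t ∈ Ioo a c, ∀ s ∈ Ioo c b, f t * g s ≤ g t * f s) :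
    (∫ t in a..c, f t) * (∫ s in c..b, g s) ≤ (∫ t in a..c, g t) * (∫ s in c..b, f s) := by
  have inner : ∀ t ∈ Ioo a c, f t * ∫ s in c..b, g s ≤ g t * ∫ s in c..b, f s := fun t ht => by
    simpa only [integral_const_mul] using
      integral_mono_on_of_le_Ioo hcb (hg₂.const_mul _) (hf₂.const_mul _) (h t ht)
  simpa only [integral_mul_const] using
    integral_mono_on_of_le_Ioo hac (hf₁.mul_const _) (hg₁.mul_const _) inner

noncomputable def betaIntegrand (a b t : ℝ) : ℝ := t ^ (a - 1) * (1 - t) ^ (b - 1)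

theorem incBeta_eq_integral (x a b : ℝ) :
    incBeta x a b = ∫ t in 0..x, betaIntegrand a b t := rfl

theorem betaIntegrand_one_sub (a b t : ℝ) :
    betaIntegrand a b (1 - t) = betaIntegrand b a t := by
  simp only [betaIntegrand, sub_sub_cancel, mul_comm]

theorem betaIntegrand_pos (a b : ℝ) {t : ℝ} (ht : t ∈ Ioo 0 1) : 0 < betaIntegrand a b t := by
  have h₀ : 0 < t := ht.1
  have h₁ : 0 < 1 - t := sub_pos.2 ht.2
  unfold betaIntegrand
  positivity

theorem intervalIntegrable_betaIntegrand_zero_half {a : ℝ} (b : ℝ) (ha : 0 < a) :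
    IntervalIntegrable (betaIntegrand a b) volume 0 (1 / 2) := by
  refine (intervalIntegrable_rpow' (by linarith)).mul_continuousOn ?_
  rw [uIcc_of_le (by norm_num)]
  exact ContinuousOn.rpow_const (by fun_prop) fun t ht => Or.inl (by linarith [ht.2])

theorem intervalIntegrable_betaIntegrand {a b u v : ℝ} (ha : 0 < a) (hb : 0 < b)
    (hu : u ∈ Icc (0 : ℝ) 1) (hv : v ∈ Icc (0 : ℝ) 1) :
    IntervalIntegrable (betaIntegrand a b) volume u v := by
  refine IntervalIntegrable.mono_set ?_ (uIcc_subset_uIcc (by rwa [uIcc_of_le zero_le_one])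
    (by rwa [uIcc_of_le zero_le_one]))
  have upper : IntervalIntegrable (betaIntegrand a b) volume (1 / 2) 1 := by
    have h := ((intervalIntegrable_betaIntegrand_zero_half a hb).comp_sub_left 1).symm
    norm_num [betaIntegrand_one_sub] at h
    exact h
  exact (intervalIntegrable_betaIntegrand_zero_half b ha).trans upper

theorem incBeta_one_pos {a b : ℝ} (ha : 0 < a) (hb : 0 < b) : 0 < incBeta 1 a b :=
  intervalIntegral_pos_of_pos_on
    (intervalIntegrable_betaIntegrand ha hb unitInterval.zero_mem unitInterval.one_mem)
    (fun _ => betaIntegrand_pos a b) one_pos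

theorem incBeta_one_eq_add {x a b : ℝ} (hx : x ∈ Icc (0 : ℝ) 1) (ha : 0 < a) (hb : 0 < b) :
    incBeta 1 a b = incBeta x a b + ∫ t in x..1, betaIntegrand a b t := by
  rw [incBeta_eq_integral, incBeta_eq_integral, integral_add_adjacent_intervals
    (intervalIntegrable_betaIntegrand ha hb unitInterval.zero_mem hx)
    (intervalIntegrable_betaIntegrand ha hb hx unitInterval.one_mem)]

theorem incBeta_one_sub_eq_integral (x a b : ℝ) :
    incBeta (1 - x) b a = ∫ t in x..1, betaIntegrand a b t := by
  simp only [incBeta_eq_integral, ← betaIntegrand_one_sub a b, integral_comp_sub_left,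
    sub_sub_cancel, sub_zero]

theorem incBeta_one_comm (a b : ℝ) : incBeta 1 b a = incBeta 1 a b := by
  simpa [incBeta_eq_integral] using incBeta_one_sub_eq_integral 0 a b

theorem regIncBeta_add_regIncBeta_one_sub {x a b : ℝ} (hx : x ∈ Icc (0 : ℝ) 1) (ha : 0 < a)
    (hb : 0 < b) :
    regIncBeta x a b + regIncBeta (1 - x) b a = 1 := by
  rw [regIncBeta, regIncBeta, incBeta_one_comm a b, ← add_div, incBeta_one_sub_eq_integral,
    ← incBeta_one_eq_add hx ha hb, div_self (incBeta_one_pos ha hb).ne']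

theorem betaIntegrand_mul_le_mul {a₁ a₂ : ℝ} (b : ℝ) (ha : a₁ ≤ a₂) {t s : ℝ} (ht : 0 < t)
    (hts : t ≤ s) (hs : s < 1) :
    betaIntegrand a₂ b t * betaIntegrand a₁ b s ≤ betaIntegrand a₁ b t * betaIntegrand a₂ b s := by
  have key := Real.rpow_mul_rpow_le_rpow_mul_rpow ht hts (sub_le_sub_right ha 1)
  have h₁s : 0 < 1 - s := sub_pos.2 hs
  have h₁t : 0 < 1 - t := by linarith
  unfold betaIntegrand
  calc _ = t ^ (a₂ - 1) * s ^ (a₁ - 1) * ((1 - t) ^ (b - 1) * (1 - s) ^ (b - 1)) := by ring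
    _ ≤ t ^ (a₁ - 1) * s ^ (a₂ - 1) * ((1 - t) ^ (b - 1) * (1 - s) ^ (b - 1)) := by gcongr
    _ = _ := by ring

theorem regIncBeta_antitone_left {x a₁ a₂ b : ℝ} (hx : x ∈ Icc (0 : ℝ) 1) (ha₁ : 0 < a₁)
    (ha : a₁ ≤ a₂) (hb : 0 < b) :
    regIncBeta x a₂ b ≤ regIncBeta x a₁ b := by
  have ha₂ : 0 < a₂ := ha₁.trans_le ha
  have h₀ := unitInterval.zero_mem
  have h₁ := unitInterval.one_mem
  have cross := integral_mul_integral_le_of_mul_le_mul hx.1 hx.2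
    (intervalIntegrable_betaIntegrand ha₂ hb h₀ hx) (intervalIntegrable_betaIntegrand ha₂ hb hx h₁)
    (intervalIntegrable_betaIntegrand ha₁ hb h₀ hx) (intervalIntegrable_betaIntegrand ha₁ hb hx h₁)
    fun t ht s hs => betaIntegrand_mul_le_mul b ha ht.1 (ht.2.trans hs.1).le hs.2
  rw [regIncBeta, regIncBeta, div_le_div_iff₀ (incBeta_one_pos ha₂ hb) (incBeta_one_pos ha₁ hb),
    incBeta_one_eq_add hx ha₁ hb, incBeta_one_eq_add hx ha₂ hb]
  simp only [incBeta_eq_integral] at cross ⊢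
  linarith

theorem regIncBeta_monotone_right {x a b₁ b₂ : ℝ} (hx : x ∈ Icc (0 : ℝ) 1) (ha : 0 < a)
    (hb₁ : 0 < b₁) (hb : b₁ ≤ b₂) :
    regIncBeta x a b₁ ≤ regIncBeta x a b₂ := by
  have hx' : 1 - x ∈ Icc (0 : ℝ) 1 := ⟨sub_nonneg.2 hx.2, sub_le_self 1 hx.1⟩
  have h₁ := regIncBeta_add_regIncBeta_one_sub hx ha hb₁
  have h₂ := regIncBeta_add_regIncBeta_one_sub hx ha (hb₁.trans_le hb)
  linarith [regIncBeta_antitone_left hx' hb₁ hb ha]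

/-- `I_{1/2}(a,b)` is nonincreasing in `a` and nondecreasing in `b`; consequently,
for fixed total `T`, `s ↦ I_{1/2}(T−s, s)` is nondecreasing on `(0,T)`. -/
theorem regIncBeta_half_monotone :
    (∀ a₁ a₂ b : ℝ, 0 < a₁ → a₁ ≤ a₂ → 0 < b →
      regIncBeta (1/2) a₂ b ≤ regIncBeta (1/2) a₁ b) ∧
    (∀ a b₁ b₂ : ℝ, 0 < a → 0 < b₁ → b₁ ≤ b₂ →
      regIncBeta (1/2) a b₁ ≤ regIncBeta (1/2) a b₂) ∧
    (∀ T s₁ s₂ : ℝ, 0 < s₁ → s₁ ≤ s₂ → s₂ < T →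
      regIncBeta (1/2) (T - s₁) s₁ ≤ regIncBeta (1/2) (T - s₂) s₂) := by
  have hx : (1 / 2 : ℝ) ∈ Icc 0 1 := by norm_num
  refine ⟨fun _ _ _ => regIncBeta_antitone_left hx, fun _ _ _ => regIncBeta_monotone_right hx,
    fun T s₁ s₂ hs₁ hs hs₂ => ?_⟩
  calc regIncBeta (1/2) (T - s₁) s₁ ≤ regIncBeta (1/2) (T - s₂) s₁ :=
        regIncBeta_antitone_left hx (by linarith) (by linarith) hs₁
    _ ≤ regIncBeta (1/2) (T - s₂) s₂ := regIncBeta_monotone_right hx (by linarith) hs₁ hs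
end
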